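/- arXiv:1702.05328 — 3 statements merged into one kernel-verified Lean document; each statement's English description precedes it below -/
import Mathlib

section
/- For every k ≥ 3 and every label type * ∈ {weakest, weak, gen}, VP_k^*(F) = VPe(F): a family of polynomials has polynomially bounded formula size if and only if it is computable by width-k *-ABPs of polynomially bounded size. -/
open MvPolynomial

noncomputable section

/-- A function `ℕ → ℕ` is polynomially bounded. -/
def PolyBounded (f : ℕ → ℕ) : Prop := ∃ c : ℕ, ∀ n, f n ≤ (n + 2) ^ c

/-- A sequence of multivariate polynomials is a family: `f n` uses only variables `x_i`
with `i < v n`, for a polynomially bounded `v`. -/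
def IsPolyFamily {F : Type} [CommSemiring F] (f : ℕ → MvPolynomial ℕ F) : Prop :=
  ∃ v : ℕ → ℕ, PolyBounded v ∧ ∀ n, ∀ i ∈ (f n).vars, i < v n

/-- Arithmetic formulas over `F` in variables `x_i`, `i : ℕ`: expressions built from
variables and constants by binary additions and multiplications. -/
inductive Formula (F : Type) where
  | var : ℕ → Formula F
  | const : F → Formula F
  | add : Formula F → Formula F → Formula F
  | mul : Formula F → Formula F → Formula F

namespace Formula

variable {F : Type} [CommSemiring F]

/-- The polynomial computed by an arithmetic formula. -/
def eval : Formula F → MvPolynomial ℕ F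
  | var i => X i
  | const c => C c
  | add φ ψ => φ.eval + ψ.eval
  | mul φ ψ => φ.eval * ψ.eval

/-- The size of a formula: the number of (binary) operations. -/
def size : Formula F → ℕ
  | var _ => 0
  | const _ => 0
  | add φ ψ => φ.size + ψ.size + 1
  | mul φ ψ => φ.size + ψ.size + 1

/-- The depth of a formula: the length of the longest root-to-leaf path. -/
def depth : Formula F → ℕ
  | var _ => 0
  | const _ => 0
  | add φ ψ => max φ.depth ψ.depth + 1
  | mul φ ψ => max φ.depth ψ.depth + 1

end Formula

/-- A general affine linear form `∑ αᵢ xᵢ + β`, i.e. a polynomial of total degree ≤ 1. -/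
def IsGenForm {F : Type} [CommSemiring F] (p : MvPolynomial ℕ F) : Prop := p.totalDegree ≤ 1

/-- A single variable or a constant. -/
def IsWeakestForm {F : Type} [CommSemiring F] (p : MvPolynomial ℕ F) : Prop :=
  (∃ i, p = X i) ∨ ∃ c, p = C c

/-- A simple affine linear form `α·xᵢ + β`. -/
def IsWeakForm {F : Type} [CommSemiring F] (p : MvPolynomial ℕ F) : Prop :=
  ∃ (α β : F) (i : ℕ), p = C α * X i + C β

/-- An affine linear form in at most two variables, `α·xᵢ + β·xⱼ + γ`. -/
def IsWeakPlusForm {F : Type} [CommSemiring F] (p : MvPolynomial ℕ F) : Prop :=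
  ∃ (α β γ : F) (i j : ℕ), p = C α * X i + C β * X j + C γ

/-- `ABPComputes form k s p`: some width-`k` algebraic branching program of size `s`, all of
whose matrix entries satisfy the predicate `form`, computes the polynomial `p`; that is,
`p = vᵀ · M_s ⋯ M_1 · w` for vectors `v, w ∈ F^k` and matrices `M_i` with entries of
type `form`. -/
def ABPComputes {F : Type} [CommSemiring F] (form : MvPolynomial ℕ F → Prop)
    (k s : ℕ) (p : MvPolynomial ℕ F) : Prop :=
  ∃ (v w : Fin k → F) (M : Fin s → Matrix (Fin k) (Fin k) (MvPolynomial ℕ F)),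
    (∀ (i : Fin s) (a b : Fin k), form (M i a b)) ∧
    p = dotProduct (fun a => C (v a))
          (Matrix.mulVec (List.ofFn M).prod fun a => C (w a))

/-- The class `VP_k^*`: families computable by width-`k` ABPs, with entries of label
type `form`, of polynomially bounded size. -/
def VPkClass (F : Type) [CommSemiring F] (k : ℕ)
    (form : MvPolynomial ℕ F → Prop) : Set (ℕ → MvPolynomial ℕ F) :=
  { f | IsPolyFamily f ∧
        ∃ s : ℕ → ℕ, PolyBounded s ∧ ∀ n, ∃ s' ≤ s n, ABPComputes form k s' (f n) }

/-- The class `VPe`: families computable by arithmetic formulas of polynomially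
bounded size. -/
def VPe (F : Type) [CommSemiring F] : Set (ℕ → MvPolynomial ℕ F) :=
  { f | IsPolyFamily f ∧
        ∃ s : ℕ → ℕ, PolyBounded s ∧ ∀ n, ∃ φ : Formula F, φ.size ≤ s n ∧ φ.eval = f n }

/-- The inclusion `F[x] → F(ε)[x]`. -/
def liftε (F : Type) [Field F] : MvPolynomial ℕ F →+* MvPolynomial ℕ (RatFunc F) :=
  MvPolynomial.map (algebraMap F (RatFunc F))

/-- The inclusion `F[ε][x] → F(ε)[x]`. -/
def liftPolyε (F : Type) [Field F] :
    MvPolynomial ℕ (Polynomial F) →+* MvPolynomial ℕ (RatFunc F) :=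
  MvPolynomial.map (algebraMap (Polynomial F) (RatFunc F))

/-- The approximation closure of a class `Cl` given over `F(ε)`: families `(f_n)` over `F`
for which there are error polynomials `f_{n;1}, …, f_{n;e(n)}` over `F` such that the family
`g_n = f_n + ε f_{n;1} + ⋯ + ε^{e(n)} f_{n;e(n)}` belongs to `Cl` over `F(ε)`. -/
def ApproxClosure (F : Type) [Field F]
    (Cl : Set (ℕ → MvPolynomial ℕ (RatFunc F))) : Set (ℕ → MvPolynomial ℕ F) :=
  { f | IsPolyFamily f ∧ ∃ (e : ℕ → ℕ) (ferr : ℕ → ℕ → MvPolynomial ℕ F),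
      (fun n => liftε F (f n) + ∑ i ∈ Finset.range (e n),
          C ((RatFunc.X : RatFunc F) ^ (i + 1)) * liftε F (ferr n i)) ∈ Cl }

/-- The poly-approximation closure: as `ApproxClosure`, with the error degree `e(n)`
additionally required to be polynomially bounded. -/
def PolyApproxClosure (F : Type) [Field F]
    (Cl : Set (ℕ → MvPolynomial ℕ (RatFunc F))) : Set (ℕ → MvPolynomial ℕ F) :=
  { f | IsPolyFamily f ∧ ∃ e : ℕ → ℕ, PolyBounded e ∧
      ∃ ferr : ℕ → ℕ → MvPolynomial ℕ F,
      (fun n => liftε F (f n) + ∑ i ∈ Finset.range (e n),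
          C ((RatFunc.X : RatFunc F) ^ (i + 1)) * liftε F (ferr n i)) ∈ Cl }

/-- The hypercube sum `∑_{b ∈ {0,1}^p} g(b, x)`: the first `p` variables of `g` are summed
over all Boolean assignments, and variable `p + i` of `g` is renamed to `x_i`. -/
def hcSum {F : Type} [CommSemiring F] (p : ℕ) (g : MvPolynomial ℕ F) : MvPolynomial ℕ F :=
  ∑ b : Fin p → Bool,
    MvPolynomial.aeval
      (fun i : ℕ => if h : i < p then (if b ⟨i, h⟩ then 1 else 0) else X (i - p)) g

/-- The nondeterminism closure `N(Cl)`: families `(f_n)` with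
`f_n(x) = ∑_{b ∈ {0,1}^{p(n)}} g_{q(n)}(b,x)` for some `(g_n) ∈ Cl` and polynomially
bounded `p`, `q`. -/
def Nclosure {F : Type} [CommSemiring F] (Cl : Set (ℕ → MvPolynomial ℕ F)) :
    Set (ℕ → MvPolynomial ℕ F) :=
  { f | IsPolyFamily f ∧ ∃ g ∈ Cl, ∃ p q : ℕ → ℕ, PolyBounded p ∧ PolyBounded q ∧
        ∀ n, f n = hcSum (p n) (g (q n)) }

/-- The matrix `Q(f) = [[f, 1], [1, 0]]`. -/
def Qmat {R : Type} [CommSemiring R] (f : MvPolynomial ℕ R) :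
    Matrix (Fin 2) (Fin 2) (MvPolynomial ℕ R) := !![f, 1; 1, 0]

/-- A primitive Q-matrix: `Q(ℓ)` for a parametrized affine linear form `ℓ`, i.e. an affine
linear form in the `x`-variables with coefficients in `F(ε)`. -/
def IsPrimitiveQ (F : Type) [Field F]
    (M : Matrix (Fin 2) (Fin 2) (MvPolynomial ℕ (RatFunc F))) : Prop :=
  ∃ ℓ : MvPolynomial ℕ (RatFunc F), ℓ.totalDegree ≤ 1 ∧ M = Qmat ℓ

/-- `M` can be written as a product of `n` primitive Q-matrices. -/
def IsProdPrimQ (F : Type) [Field F] (n : ℕ)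
    (M : Matrix (Fin 2) (Fin 2) (MvPolynomial ℕ (RatFunc F))) : Prop :=
  ∃ L : Fin n → Matrix (Fin 2) (Fin 2) (MvPolynomial ℕ (RatFunc F)),
    (∀ i, IsPrimitiveQ F (L i)) ∧ M = (List.ofFn L).prod

/-- `M ∈ Q(f) + O(ε^k)`: `M = Q(f) + ε^k · E` for some matrix `E` with entries
in `F[ε][x]`. -/
def InQErr (F : Type) [Field F] (f : MvPolynomial ℕ F) (k : ℕ)
    (M : Matrix (Fin 2) (Fin 2) (MvPolynomial ℕ (RatFunc F))) : Prop :=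
  ∃ E : Matrix (Fin 2) (Fin 2) (MvPolynomial ℕ (Polynomial F)),
    M = Qmat (liftε F f) +
      (C ((RatFunc.X : RatFunc F) ^ k) : MvPolynomial ℕ (RatFunc F)) • E.map (liftPolyε F)

/-- `M` has entries in `F[ε][x]` and error degree at most `e`: every entry has degree at
most `e` in `ε`. -/
def ErrDegLE (F : Type) [Field F]
    (M : Matrix (Fin 2) (Fin 2) (MvPolynomial ℕ (RatFunc F))) (e : ℕ) : Prop :=
  ∃ E : Matrix (Fin 2) (Fin 2) (MvPolynomial ℕ (Polynomial F)),
    M = E.map (liftPolyε F) ∧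
    ∀ (a b : Fin 2) (m : ℕ →₀ ℕ), (MvPolynomial.coeff m (E a b)).natDegree ≤ e

/-- The generalized Fibonacci polynomials: `F_0 = 1`, `F_1 = x_1`,
`F_n = x_n · F_{n-1} + F_{n-2}` (variables indexed from 0). -/
def fibPoly (R : Type) [CommSemiring R] : ℕ → MvPolynomial ℕ R
  | 0 => 1
  | 1 => X 0
  | n + 2 => X (n + 1) * fibPoly R (n + 1) + fibPoly R n

/-- `f` is a degeneration of the Fibonacci polynomial `F_m` witnessing border Fibonacci
complexity at most `m`: there are parametrized affine linear forms `ℓ_1, …, ℓ_m` with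
`F_m(ℓ_1, …, ℓ_m) = f + ε·g` for some `g ∈ F[ε][x]`. -/
def FibBorderProj (F : Type) [Field F] (f : MvPolynomial ℕ F) (m : ℕ) : Prop :=
  ∃ ℓ : ℕ → MvPolynomial ℕ (RatFunc F),
    (∀ i, (ℓ i).totalDegree ≤ 1) ∧
    ∃ g : MvPolynomial ℕ (Polynomial F),
      MvPolynomial.aeval ℓ (fibPoly (RatFunc F) m) =
        liftε F f + C (RatFunc.X : RatFunc F) * liftPolyε F g


/-!
`VP_k^gen ⊆ VPe`: after substituting `0` for the variables that the computed polynomial does not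
use, every entry of the ABP is an affine form with a formula of size `O(v)`. Multiplying the `s`
matrices along a balanced binary tree of depth `⌈log₂ s⌉` multiplies entry sizes by at most
`2k + 1` per level, which is polynomial in `s` for fixed `k`.

`VPe ⊆ VP_k^weakest` for `k ≥ 3`: Brent's separator argument rebalances a formula of size `s` to
depth `O(log s)`. Ben-Or and Cleve then write the transvection `1 + f·E_ab` as a product of
`O(4^depth)` matrices whose entries are variables or constants: sums of formulas are products of
transvections at the same position, products are commutators
`[1 + g·E_ac, 1 + h·E_cb] = 1 + gh·E_ab` through a third index `c`, and the inverse transvection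
`1 - g·E_ac` is a conjugate of `1 + g·E_ac` by a diagonal sign matrix.
-/

namespace PolyBounded

theorem const (a : ℕ) : PolyBounded fun _ => a :=
  ⟨a, fun n => (Nat.lt_two_pow_self).le.trans (Nat.pow_le_pow_left (by omega) a)⟩

theorem mul {f g : ℕ → ℕ} (hf : PolyBounded f) (hg : PolyBounded g) :
    PolyBounded fun n => f n * g n := by
  obtain ⟨c, hc⟩ := hf
  obtain ⟨d, hd⟩ := hg
  exact ⟨c + d, fun n => pow_add (n + 2) c d ▸ Nat.mul_le_mul (hc n) (hd n)⟩

theorem add {f g : ℕ → ℕ} (hf : PolyBounded f) (hg : PolyBounded g) :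
    PolyBounded fun n => f n + g n := by
  obtain ⟨c, hc⟩ := hf
  obtain ⟨d, hd⟩ := hg
  refine ⟨c + d + 1, fun n => ?_⟩
  have hc' : f n ≤ (n + 2) ^ (c + d) := (hc n).trans (Nat.pow_le_pow_right (by omega) (by omega))
  have hd' : g n ≤ (n + 2) ^ (c + d) := (hd n).trans (Nat.pow_le_pow_right (by omega) (by omega))
  calc f n + g n ≤ 2 * (n + 2) ^ (c + d) := by omega
    _ ≤ (n + 2) ^ (c + d) * (n + 2) := by rw [mul_comm]; gcongr; omega
    _ = (n + 2) ^ (c + d + 1) := (pow_succ _ _).symm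

theorem pow {f : ℕ → ℕ} (hf : PolyBounded f) (e : ℕ) : PolyBounded fun n => f n ^ e := by
  obtain ⟨c, hc⟩ := hf
  exact ⟨c * e, fun n => pow_mul (n + 2) c e ▸ Nat.pow_le_pow_left (hc n) e⟩

end PolyBounded

theorem two_pow_clog_two_le (m : ℕ) : 2 ^ Nat.clog 2 m ≤ 2 * m + 1 := by
  rcases Nat.lt_or_ge m 2 with hm | hm
  · rw [Nat.clog_of_right_le_one (by omega)]
    omega
  · have hlt : 2 ^ (Nat.clog 2 m - 1) < m := Nat.pow_pred_clog_lt_self (by norm_num) hm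
    have hpos : 1 ≤ Nat.clog 2 m := Nat.clog_pos (by norm_num) hm
    rw [← Nat.sub_add_cancel hpos, pow_succ]
    omega

theorem four_mul_pow_sixteen_le {a b : ℕ} (h : 12 * a ≤ 11 * b) : 4 * a ^ 16 ≤ b ^ 16 := by
  have : 11 ^ 16 * (4 * a ^ 16) ≤ 11 ^ 16 * b ^ 16 :=
    calc 11 ^ 16 * (4 * a ^ 16) ≤ 12 ^ 16 * a ^ 16 := by rw [← mul_assoc]; gcongr; norm_num
      _ ≤ 11 ^ 16 * b ^ 16 := by rw [← mul_pow, ← mul_pow]; exact Nat.pow_le_pow_left h 16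
  exact Nat.le_of_mul_le_mul_left this (by norm_num)

namespace Formula

section Depth

variable {R : Type}

theorem depth_le_size (φ : Formula R) : φ.depth ≤ φ.size := by
  induction φ with
  | var | const => exact le_rfl
  | add φ ψ ihφ ihψ | mul φ ψ ihφ ihψ => simp only [depth, size]; omega

theorem two_pow_depth_add_mul_le {A g B : Formula R} {X : ℕ} (hA : 2 ^ A.depth ≤ X)
    (hg : 2 ^ g.depth ≤ X) (hB : 2 ^ B.depth ≤ X) : 2 ^ (add (mul A g) B).depth ≤ 4 * X := by
  have hmono : Monotone (2 ^ · : ℕ → ℕ) := pow_right_mono₀ one_le_two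
  calc 2 ^ (add (mul A g) B).depth ≤ 2 ^ (max (max A.depth g.depth) B.depth + 2) :=
        Nat.pow_le_pow_right two_pos (by simp only [depth]; omega)
    _ = 4 * max (max (2 ^ A.depth) (2 ^ g.depth)) (2 ^ B.depth) := by
        rw [pow_add, hmono.map_max, hmono.map_max]; ring
    _ ≤ 4 * X := by gcongr; exact max_le (max_le hA hg) hB

end Depth

variable {R : Type} [CommSemiring R] {k : ℕ}

def sumFin {n : ℕ} (f : Fin n → Formula R) : Formula R :=
  (List.ofFn f).foldr add (const 0)

theorem eval_sumFin {n : ℕ} (f : Fin n → Formula R) : (sumFin f).eval = ∑ i, (f i).eval := by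
  induction n with
  | zero => simp [sumFin, eval]
  | succ n ih =>
    have := ih fun i => f i.succ
    simp only [sumFin, List.ofFn_succ, List.foldr_cons, eval, Fin.sum_univ_succ] at this ⊢
    rw [this]

theorem size_sumFin_le {n T : ℕ} (f : Fin n → Formula R) (hf : ∀ i, (f i).size ≤ T) :
    (sumFin f).size ≤ n * (T + 1) := by
  induction n with
  | zero => simp [sumFin, size]
  | succ n ih =>
    have htail := ih (fun i => f i.succ) fun i => hf i.succ
    simp only [sumFin, List.ofFn_succ, List.foldr_cons, size] at htail ⊢
    have := hf 0
    rw [Nat.succ_mul]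
    omega

def matMul (A B : Matrix (Fin k) (Fin k) (Formula R)) : Matrix (Fin k) (Fin k) (Formula R) :=
  Matrix.of fun a b => sumFin fun j => mul (A a j) (B j b)

theorem map_eval_matMul (A B : Matrix (Fin k) (Fin k) (Formula R)) :
    (matMul A B).map eval = A.map eval * B.map eval := by
  ext a b
  simp [matMul, eval_sumFin, eval, Matrix.mul_apply]

theorem size_matMul_le {A B : Matrix (Fin k) (Fin k) (Formula R)} {S : ℕ}
    (hA : ∀ a b, (A a b).size + 1 ≤ S) (hB : ∀ a b, (B a b).size + 1 ≤ S) (a b : Fin k) :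
    (matMul A B a b).size + 1 ≤ (2 * k + 1) * S := by
  have hS := hA a a
  have := size_sumFin_le (fun j => mul (A a j) (B j b)) (T := 2 * S - 1) fun j => by
    have := hA a j
    have := hB j b
    simp only [size]
    omega
  have : k * (2 * S - 1 + 1) = 2 * k * S := by rw [Nat.sub_add_cancel (by omega)]; ring
  simp only [matMul, Matrix.of_apply]
  nlinarith

def balancedProd (f : ℕ → Matrix (Fin k) (Fin k) (Formula R)) :
    ℕ → ℕ → Matrix (Fin k) (Fin k) (Formula R)
  | 0, i => f i
  | d + 1, i => matMul (balancedProd f d (2 * i)) (balancedProd f d (2 * i + 1))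

theorem map_eval_balancedProd (f : ℕ → Matrix (Fin k) (Fin k) (Formula R)) (d i : ℕ) :
    (balancedProd f d i).map eval =
      ((List.range (2 ^ d)).map fun j => (f (2 ^ d * i + j)).map eval).prod := by
  induction d generalizing i with
  | zero => simp [balancedProd]
  | succ d ih =>
    rw [balancedProd, map_eval_matMul, ih, ih, pow_succ, mul_two, List.range_add,
      List.map_append, List.prod_append, List.map_map]
    congr 3 with j
    · ring_nf
    · simp only [Function.comp_apply]
      ring_nf

theorem size_balancedProd_le {f : ℕ → Matrix (Fin k) (Fin k) (Formula R)} {T : ℕ}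
    (hf : ∀ j a b, (f j a b).size ≤ T) (d i : ℕ) (a b : Fin k) :
    (balancedProd f d i a b).size + 1 ≤ (2 * k + 1) ^ d * (T + 1) := by
  induction d generalizing i a b with
  | zero => simpa [balancedProd] using hf i a b
  | succ d ih =>
    rw [pow_succ', mul_assoc]
    exact size_matMul_le (ih (2 * i)) (ih (2 * i + 1)) a b

def padOne {s : ℕ} (M : Fin s → Matrix (Fin k) (Fin k) (Formula R)) (j : ℕ) :
    Matrix (Fin k) (Fin k) (Formula R) :=
  if h : j < s then M ⟨j, h⟩ else (1 : Matrix (Fin k) (Fin k) R).map const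

theorem map_eval_balancedProd_padOne {s d : ℕ} (hs : s ≤ 2 ^ d)
    (M : Fin s → Matrix (Fin k) (Fin k) (Formula R)) :
    (balancedProd (padOne M) d 0).map eval = (List.ofFn fun i => (M i).map eval).prod := by
  obtain ⟨r, hr⟩ := Nat.exists_eq_add_of_le hs
  have hpad : ∀ j, s ≤ j → (padOne M j).map eval = 1 := fun j hj => by
    simp only [padOne, not_lt.mpr hj, dite_false, Matrix.map_map, Function.comp_def, eval]
    exact Matrix.map_one _ (map_zero C) (map_one C)
  rw [map_eval_balancedProd, hr, List.range_add, List.map_append, List.prod_append,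
    List.prod_eq_one (l := List.map _ (List.map _ _)) (by simp [hpad]), mul_one]
  congr 1
  refine List.ext_getElem (by simp) fun j hj _ => ?_
  simp [padOne, show j < s by simpa using hj]

theorem size_padOne_le {s T : ℕ} {M : Fin s → Matrix (Fin k) (Fin k) (Formula R)}
    (hM : ∀ i a b, (M i a b).size ≤ T) (j : ℕ) (a b : Fin k) :
    (padOne M j a b).size ≤ T := by
  unfold padOne
  split
  · exact hM _ a b
  · simp [size]

def dotMulVec (v w : Fin k → R) (P : Matrix (Fin k) (Fin k) (Formula R)) : Formula R :=
  sumFin fun a => mul (const (v a)) (sumFin fun b => mul (P a b) (const (w b)))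

theorem eval_dotMulVec (v w : Fin k → R) (P : Matrix (Fin k) (Fin k) (Formula R)) :
    (dotMulVec v w P).eval =
      dotProduct (fun a => C (v a)) (Matrix.mulVec (P.map eval) fun b => C (w b)) := by
  simp [dotMulVec, eval_sumFin, eval, dotProduct, Matrix.mulVec]

theorem size_dotMulVec_le {v w : Fin k → R} {P : Matrix (Fin k) (Fin k) (Formula R)} {S : ℕ}
    (hP : ∀ a b, (P a b).size + 1 ≤ S) : (dotMulVec v w P).size ≤ k * (k * (S + 1) + 2) := by
  refine size_sumFin_le _ fun a => ?_
  have := size_sumFin_le (fun b => mul (P a b) (const (w b))) (T := S) fun b => by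
    simpa [size] using hP a b
  simp only [size]
  omega

def affine (c : R) (coeffs : ℕ → R) (v : ℕ) : Formula R :=
  add (const c) (sumFin fun i : Fin v => mul (const (coeffs i)) (var i))

theorem eval_affine (c : R) (coeffs : ℕ → R) (v : ℕ) :
    (affine c coeffs v).eval = C c + ∑ i ∈ Finset.range v, C (coeffs i) * X i := by
  simp [affine, eval, eval_sumFin, Fin.sum_univ_eq_sum_range (fun i => C (coeffs i) * X i)]

theorem size_affine_le (c : R) (coeffs : ℕ → R) (v : ℕ) :
    (affine c coeffs v).size ≤ 2 * v + 1 := by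
  have := size_sumFin_le (fun i : Fin v => mul (const (coeffs i)) (var i)) (T := 1) fun _ => by
    simp [size]
  simp only [affine, size]
  omega

def HasSeparator (e : MvPolynomial ℕ R) (size t : ℕ) : Prop :=
  ∃ g A B : Formula R, A.eval * g.eval + B.eval = e ∧ g.size ≤ t ∧ t ≤ 2 * g.size ∧
    A.size + g.size ≤ size ∧ B.size + g.size ≤ size

theorem hasSeparator_add {φ₁ φ₂ : Formula R} (hle : φ₂.size ≤ φ₁.size)
    (ih : ∀ t < φ₁.size, HasSeparator φ₁.eval φ₁.size t) {t : ℕ}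
    (ht : t < φ₁.size + φ₂.size + 1) :
    HasSeparator (φ₁.eval + φ₂.eval) (φ₁.size + φ₂.size + 1) t := by
  by_cases hstop : φ₁.size ≤ t
  · exact ⟨φ₁, const 1, φ₂, by simp [eval], hstop, by omega, by simp only [size]; omega,
      by omega⟩
  · obtain ⟨g, A, B, hev, hg, htg, hA, hB⟩ := ih t (by omega)
    exact ⟨g, A, add B φ₂, by simp only [eval, ← hev]; ring, hg, htg, by omega,
      by simp only [size]; omega⟩

theorem hasSeparator_mul {φ₁ φ₂ : Formula R} (hle : φ₂.size ≤ φ₁.size)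
    (ih : ∀ t < φ₁.size, HasSeparator φ₁.eval φ₁.size t) {t : ℕ}
    (ht : t < φ₁.size + φ₂.size + 1) :
    HasSeparator (φ₁.eval * φ₂.eval) (φ₁.size + φ₂.size + 1) t := by
  by_cases hstop : φ₁.size ≤ t
  · exact ⟨φ₁, φ₂, const 0, by simp [eval, mul_comm], hstop, by omega, by omega,
      by simp only [size]; omega⟩
  · obtain ⟨g, A, B, hev, hg, htg, hA, hB⟩ := ih t (by omega)
    exact ⟨g, mul A φ₂, mul B φ₂, by simp only [eval, ← hev]; ring, hg, htg,
      by simp only [size]; omega, by simp only [size]; omega⟩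

theorem hasSeparator (φ : Formula R) {t : ℕ} (ht : t < φ.size) :
    HasSeparator φ.eval φ.size t := by
  induction φ generalizing t with
  | var | const => simp [size] at ht
  | add φ₁ φ₂ ih₁ ih₂ =>
    rcases le_total φ₂.size φ₁.size with hle | hle
    · exact hasSeparator_add hle (fun _ => ih₁) ht
    · simpa only [eval, size, add_comm, add_right_comm _ _ 1] using
        hasSeparator_add hle (fun _ => ih₂) (t := t) (by simp only [size] at ht; omega)
  | mul φ₁ φ₂ ih₁ ih₂ =>
    rcases le_total φ₂.size φ₁.size with hle | hle
    · exact hasSeparator_mul hle (fun _ => ih₁) ht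
    · simpa only [eval, size, mul_comm, add_comm, add_right_comm _ _ 1] using
        hasSeparator_mul hle (fun _ => ih₂) (t := t) (by simp only [size] at ht; omega)

theorem exists_eval_eq_two_pow_depth_le (φ : Formula R) :
    ∃ ψ : Formula R, ψ.eval = φ.eval ∧ 2 ^ ψ.depth ≤ (φ.size + 2) ^ 16 := by
  induction hs : φ.size using Nat.strong_induction_on generalizing φ with
  | _ s ih =>
  rcases le_or_gt s 10 with hsmall | hlarge
  · refine ⟨φ, rfl, ?_⟩
    calc 2 ^ φ.depth ≤ 2 ^ s := Nat.pow_le_pow_right two_pos (hs ▸ depth_le_size φ)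
      _ ≤ (s + 2) ^ s := Nat.pow_le_pow_left (by omega) s
      _ ≤ (s + 2) ^ 16 := Nat.pow_le_pow_right (by omega) (by omega)
  -- Separating at `t = 2s/3` leaves `g`, `A`, `B` of size at most `2s/3 + 1`, and rebuilding
  -- `A * g + B` costs two levels of depth: `4 * (2s/3 + 3) ^ 16 ≤ (s + 2) ^ 16` once `s > 10`.
  obtain ⟨g, A, B, hev, hg, htg, hA, hB⟩ := hs ▸ hasSeparator φ (t := 2 * s / 3) (by omega)
  have hpart : ∀ χ : Formula R, χ.size ≤ 2 * s / 3 + 1 →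
      ∃ ψ : Formula R, ψ.eval = χ.eval ∧ 2 ^ ψ.depth ≤ (2 * s / 3 + 3) ^ 16 := by
    intro χ hχ
    obtain ⟨ψ, hψ, hd⟩ := ih χ.size (by omega) χ rfl
    exact ⟨ψ, hψ, hd.trans (Nat.pow_le_pow_left (by omega) 16)⟩
  obtain ⟨ψg, hψg, hdg⟩ := hpart g (by omega)
  obtain ⟨ψA, hψA, hdA⟩ := hpart A (by omega)
  obtain ⟨ψB, hψB, hdB⟩ := hpart B (by omega)
  refine ⟨add (mul ψA ψg) ψB, by simp only [eval, hψA, hψg, hψB, hev], ?_⟩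
  exact (two_pow_depth_add_mul_le hdA hdg hdB).trans (four_mul_pow_sixteen_le (by omega))

end Formula

section ABPToFormula

variable {R : Type} [CommSemiring R] {k s : ℕ}

def truncVars (v : ℕ) (i : ℕ) : MvPolynomial ℕ R := if i < v then X i else 0

theorem aeval_truncVars_of_vars_lt {p : MvPolynomial ℕ R} {v : ℕ}
    (hv : ∀ i ∈ p.vars, i < v) : aeval (truncVars v) p = p :=
  calc aeval (truncVars v) p = aeval X p :=
        eval₂Hom_congr' rfl (fun i hi _ => if_pos (hv i hi)) rfl
    _ = p := aeval_X_left_apply p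

theorem eq_zero_or_eq_single_one {m : ℕ →₀ ℕ} (hm : (m.sum fun _ e => e) ≤ 1) :
    m = 0 ∨ ∃ i, m = Finsupp.single i 1 := by
  rcases Nat.le_one_iff_eq_zero_or_eq_one.mp hm with h | h
  · exact Or.inl ((Finsupp.degree_eq_zero_iff m).mp h)
  · exact Or.inr ((Finsupp.sum_eq_one_iff m).mp h)

theorem aeval_truncVars_of_totalDegree_le_one {p : MvPolynomial ℕ R} (hp : p.totalDegree ≤ 1)
    (v : ℕ) : aeval (truncVars v) p =
      C (coeff 0 p) + ∑ i ∈ Finset.range v, C (coeff (Finsupp.single i 1) p) * X i := by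
  have hmonomial : ∀ m ∈ p.support, aeval (truncVars v) (monomial m (coeff m p)) =
      C (coeff 0 (monomial m (coeff m p))) + ∑ i ∈ Finset.range v,
        C (coeff (Finsupp.single i 1) (monomial m (coeff m p))) * X i := by
    intro m hm
    rcases eq_zero_or_eq_single_one ((le_totalDegree hm).trans hp) with rfl | ⟨j, rfl⟩
    · simp [eq_comm (a := (0 : ℕ →₀ ℕ))]
    · rw [aeval_monomial]
      simp [coeff_monomial, truncVars, Finsupp.single_left_inj, apply_ite C, ite_mul]
  conv_lhs => rw [p.as_sum, map_sum, Finset.sum_congr rfl hmonomial]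
  conv_rhs => rw [p.as_sum]
  simp only [coeff_sum, map_sum, Finset.sum_mul, Finset.sum_add_distrib]
  rw [Finset.sum_comm]

theorem ABPComputes.map {form form' : MvPolynomial ℕ R → Prop} {p : MvPolynomial ℕ R}
    (τ : MvPolynomial ℕ R →ₐ[R] MvPolynomial ℕ R) (hτ : ∀ q, form q → form' (τ q))
    (h : ABPComputes form k s p) : ABPComputes form' k s (τ p) := by
  obtain ⟨v, w, M, hM, rfl⟩ := h
  refine ⟨v, w, fun i => (M i).map τ, fun i a b => hτ _ (hM i a b), ?_⟩
  have hprod : ((List.ofFn M).prod).map τ = (List.ofFn fun i => (M i).map τ).prod := by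
    simpa [List.map_ofFn, Function.comp_def] using
      map_list_prod (τ.toRingHom.mapMatrix (m := Fin k)) (List.ofFn M)
  simp only [← hprod, dotProduct, Matrix.mulVec, map_sum, map_mul, Matrix.map_apply, algHom_C,
    algebraMap_eq]

theorem ABPComputes.exists_formula {form : MvPolynomial ℕ R → Prop} {p : MvPolynomial ℕ R}
    {T : ℕ} (hform : ∀ q, form q → ∃ φ : Formula R, φ.eval = q ∧ φ.size ≤ T)
    (h : ABPComputes form k s p) : ∃ φ : Formula R, φ.eval = p ∧
      φ.size ≤ k * (k * ((2 * k + 1) ^ Nat.clog 2 s * (T + 1) + 1) + 2) := by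
  obtain ⟨v, w, M, hM, rfl⟩ := h
  choose φ hφeval hφsize using fun i a b => hform _ (hM i a b)
  let P := Formula.balancedProd (Formula.padOne fun i => Matrix.of (φ i)) (Nat.clog 2 s) 0
  refine ⟨Formula.dotMulVec v w P, ?_, Formula.size_dotMulVec_le fun a b =>
    Formula.size_balancedProd_le (Formula.size_padOne_le fun i => hφsize i) _ _ a b⟩
  rw [Formula.eval_dotMulVec,
    Formula.map_eval_balancedProd_padOne (Nat.le_pow_clog one_lt_two s)]
  congr 3
  exact List.ofFn_inj.mpr (funext fun i => Matrix.ext (hφeval i))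

theorem exists_formula_of_abpComputes_isGenForm {p : MvPolynomial ℕ R} {v : ℕ}
    (hv : ∀ i ∈ p.vars, i < v) (h : ABPComputes IsGenForm k s p) : ∃ φ : Formula R,
      φ.eval = p ∧ φ.size ≤ k * (k * ((2 * k + 1) ^ Nat.clog 2 s * (2 * v + 2) + 1) + 2) := by
  have htrunc := h.map (aeval (truncVars v))
    (form' := fun q => ∃ (c : R) (coeffs : ℕ → R),
      q = C c + ∑ i ∈ Finset.range v, C (coeffs i) * X i)
    fun q hq => ⟨_, _, aeval_truncVars_of_totalDegree_le_one hq v⟩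
  rw [aeval_truncVars_of_vars_lt hv] at htrunc
  exact htrunc.exists_formula fun q ⟨c, coeffs, hq⟩ =>
    ⟨.affine c coeffs v, hq ▸ Formula.eval_affine c coeffs v,
      Formula.size_affine_le c coeffs v⟩

end ABPToFormula

theorem vpkClass_isGenForm_subset_vpe (F : Type) [CommSemiring F] (k : ℕ) :
    VPkClass F k IsGenForm ⊆ VPe F := by
  rintro f ⟨⟨v, hv, hvars⟩, s, hs, habp⟩
  refine ⟨⟨v, hv, hvars⟩,
    fun n => k * (k * ((2 * s n + 1) ^ (k + 1) * (2 * v n + 2) + 1) + 2), ?_, fun n => ?_⟩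
  · have := (PolyBounded.const 2).mul hs |>.add (.const 1) |>.pow (k + 1) |>.mul
      ((PolyBounded.const 2).mul hv |>.add (.const 2)) |>.add (.const 1)
    exact (PolyBounded.const k).mul ((PolyBounded.const k).mul this |>.add (.const 2))
  obtain ⟨s', hs', habp'⟩ := habp n
  obtain ⟨φ, hφ, hsize⟩ := exists_formula_of_abpComputes_isGenForm (hvars n) habp'
  refine ⟨φ, hsize.trans ?_, hφ⟩
  have hbase : 2 * k + 1 ≤ 2 ^ (k + 1) := by
    have := Nat.lt_two_pow_self (n := k)
    rw [pow_succ]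
    omega
  have hlog : (2 * k + 1) ^ Nat.clog 2 s' ≤ (2 * s n + 1) ^ (k + 1) :=
    calc (2 * k + 1) ^ Nat.clog 2 s' ≤ (2 ^ (k + 1)) ^ Nat.clog 2 s' := by gcongr
      _ = (2 ^ Nat.clog 2 s') ^ (k + 1) := by rw [← pow_mul, ← pow_mul, mul_comm]
      _ ≤ (2 * s' + 1) ^ (k + 1) := by gcongr; exact two_pow_clog_two_le s'
      _ ≤ (2 * s n + 1) ^ (k + 1) := by gcongr
  show _ ≤ k * (k * ((2 * s n + 1) ^ (k + 1) * (2 * v n + 2) + 1) + 2)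
  gcongr

section Transvection

open Matrix

variable {n R : Type} [Fintype n] [DecidableEq n] [CommRing R]

def signFlip (a : n) : Matrix n n R := diagonal (Function.update 1 a (-1))

theorem signFlip_mul_transvection_mul_signFlip {a b : n} (hab : a ≠ b) (q : R) :
    signFlip a * transvection a b q * signFlip a = transvection a b (-q) := by
  ext i j
  simp only [signFlip, transvection, diagonal_mul, mul_diagonal, Matrix.add_apply, one_apply,
    single_apply, Function.update_apply, Pi.one_apply]
  grind

theorem transvection_commutator {a b c : n} (hac : a ≠ c) (hcb : c ≠ b) (hab : a ≠ b)
    (q r : R) : transvection a c q * transvection c b r * transvection a c (-q) *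
      transvection c b (-r) = transvection a b (q * r) := by
  simp [transvection, add_mul, mul_add, single_mul_single_of_ne, hac.symm, hcb.symm, hab.symm,
    ← single_neg]
  abel

end Transvection

section BenOrCleve

open Matrix

variable {R : Type} {k : ℕ}

def IsABPProduct [CommSemiring R] (form : MvPolynomial ℕ R → Prop) (n : ℕ)
    (M : Matrix (Fin k) (Fin k) (MvPolynomial ℕ R)) : Prop :=
  ∃ L : List (Matrix (Fin k) (Fin k) (MvPolynomial ℕ R)),
    L.length = n ∧ (∀ N ∈ L, ∀ a b, form (N a b)) ∧ L.prod = M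

namespace IsABPProduct

variable [CommSemiring R] {form : MvPolynomial ℕ R → Prop} {m n : ℕ}
  {M N : Matrix (Fin k) (Fin k) (MvPolynomial ℕ R)}

theorem of_forall (h : ∀ a b, form (M a b)) : IsABPProduct form 1 M :=
  ⟨[M], rfl, by simpa using h, by simp⟩

theorem mul (hM : IsABPProduct form m M) (hN : IsABPProduct form n N) :
    IsABPProduct form (m + n) (M * N) := by
  obtain ⟨L, rfl, hL, rfl⟩ := hM
  obtain ⟨L', rfl, hL', rfl⟩ := hN
  refine ⟨L ++ L', List.length_append, fun N hN => ?_, List.prod_append⟩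
  rcases List.mem_append.mp hN with h | h
  exacts [hL N h, hL' N h]

theorem abpComputes (h : IsABPProduct form n M) (a b : Fin k) :
    ABPComputes form k n (M a b) := by
  obtain ⟨L, rfl, hL, rfl⟩ := h
  refine ⟨Pi.single a 1, Pi.single b 1, L.get, fun i => hL _ (L.get_mem i), ?_⟩
  rw [List.ofFn_get]
  simp [dotProduct, mulVec, Pi.single_apply, apply_ite C]

end IsABPProduct

variable [CommRing R]

theorem isWeakestForm_signFlip (a i j : Fin k) :
    IsWeakestForm (signFlip a i j : MvPolynomial ℕ R) :=
  Or.inr ⟨if i = j then (if i = a then -1 else 1) else 0, by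
    simp only [signFlip, diagonal_apply, Function.update_apply, Pi.one_apply]
    split_ifs <;> simp⟩

theorem isWeakestForm_transvection {a b : Fin k} (hab : a ≠ b) {q : MvPolynomial ℕ R}
    (hq : IsWeakestForm q) (i j : Fin k) : IsWeakestForm (transvection a b q i j) := by
  by_cases h : a = i ∧ b = j
  · obtain ⟨rfl, rfl⟩ := h
    simpa [transvection, one_apply_ne hab] using hq
  · exact Or.inr ⟨if i = j then 1 else 0, by simp [transvection, h, one_apply, apply_ite C]⟩

theorem IsABPProduct.transvection_neg {a b : Fin k} (hab : a ≠ b) {q : MvPolynomial ℕ R}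
    {n : ℕ} (h : IsABPProduct IsWeakestForm n (transvection a b q)) :
    IsABPProduct IsWeakestForm (1 + n + 1) (transvection a b (-q)) := by
  rw [← signFlip_mul_transvection_mul_signFlip hab]
  exact ((of_forall (isWeakestForm_signFlip a)).mul h).mul (of_forall (isWeakestForm_signFlip a))

theorem Formula.exists_isABPProduct_transvection (hk : 3 ≤ k) (φ : Formula R) {a b : Fin k}
    (hab : a ≠ b) : ∃ n, n + 3 ≤ 4 ^ (φ.depth + 1) ∧
      IsABPProduct IsWeakestForm n (transvection a b φ.eval) := by
  induction φ generalizing a b with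
  | var i => exact ⟨1, by simp [Formula.depth],
      .of_forall (isWeakestForm_transvection hab (Or.inl ⟨i, rfl⟩))⟩
  | const c => exact ⟨1, by simp [Formula.depth],
      .of_forall (isWeakestForm_transvection hab (Or.inr ⟨c, rfl⟩))⟩
  | add φ₁ φ₂ ih₁ ih₂ =>
    obtain ⟨n₁, hn₁, h₁⟩ := ih₁ hab
    obtain ⟨n₂, hn₂, h₂⟩ := ih₂ hab
    have hd₁ : 4 ^ (φ₁.depth + 1) ≤ 4 ^ (max φ₁.depth φ₂.depth + 1) :=
      Nat.pow_le_pow_right (by norm_num) (by omega)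
    have hd₂ : 4 ^ (φ₂.depth + 1) ≤ 4 ^ (max φ₁.depth φ₂.depth + 1) :=
      Nat.pow_le_pow_right (by norm_num) (by omega)
    refine ⟨n₁ + n₂, ?_, ?_⟩
    · rw [Formula.depth, pow_succ _ (_ + 1)]
      omega
    · rw [Formula.eval, ← transvection_mul_transvection_same _ _ hab]
      exact h₁.mul h₂
  | mul φ₁ φ₂ ih₁ ih₂ =>
    obtain ⟨c, hca, hcb⟩ := Fin.exists_ne_and_ne_of_two_lt a b (by omega)
    obtain ⟨n₁, hn₁, h₁⟩ := ih₁ hca.symm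
    obtain ⟨n₂, hn₂, h₂⟩ := ih₂ hcb
    have hd₁ : 4 ^ (φ₁.depth + 1) ≤ 4 ^ (max φ₁.depth φ₂.depth + 1) :=
      Nat.pow_le_pow_right (by norm_num) (by omega)
    have hd₂ : 4 ^ (φ₂.depth + 1) ≤ 4 ^ (max φ₁.depth φ₂.depth + 1) :=
      Nat.pow_le_pow_right (by norm_num) (by omega)
    refine ⟨n₁ + n₂ + (1 + n₁ + 1) + (1 + n₂ + 1), ?_, ?_⟩
    · rw [Formula.depth, pow_succ _ (_ + 1)]
      omega
    · rw [Formula.eval, ← transvection_commutator hca.symm hcb hab]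
      exact ((h₁.mul h₂).mul (h₁.transvection_neg hca.symm)).mul (h₂.transvection_neg hcb)

end BenOrCleve

theorem vpe_subset_vpkClass_isWeakestForm (F : Type) [CommRing F] {k : ℕ} (hk : 3 ≤ k) :
    VPe F ⊆ VPkClass F k IsWeakestForm := by
  rintro f ⟨hfam, s, hs, hform⟩
  refine ⟨hfam, fun n => 4 * ((s n + 2) ^ 16) ^ 2,
    (PolyBounded.const 4).mul ((hs.add (.const 2)).pow 16 |>.pow 2), fun n => ?_⟩
  obtain ⟨φ, hsize, hφ⟩ := hform n
  obtain ⟨ψ, hψ, hdepth⟩ := φ.exists_eval_eq_two_pow_depth_le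
  have hab : (⟨0, by omega⟩ : Fin k) ≠ ⟨1, by omega⟩ := by simp
  obtain ⟨m, hm, habp⟩ := ψ.exists_isABPProduct_transvection hk hab
  refine ⟨m, ?_, by simpa [← hφ, ← hψ, Matrix.transvection, Matrix.one_apply_ne hab] using
    habp.abpComputes ⟨0, by omega⟩ ⟨1, by omega⟩⟩
  calc m ≤ 4 ^ (ψ.depth + 1) := by omega
    _ = 4 * (2 ^ ψ.depth) ^ 2 := by rw [← pow_mul, mul_comm ψ.depth, pow_mul, pow_succ']; rfl
    _ ≤ 4 * ((s n + 2) ^ 16) ^ 2 := Nat.mul_le_mul_left 4 <| Nat.pow_le_pow_left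
        (hdepth.trans (Nat.pow_le_pow_left (Nat.add_le_add_right hsize 2) 16)) 2

theorem IsWeakestForm.isWeakForm {R : Type} [CommSemiring R] {p : MvPolynomial ℕ R}
    (h : IsWeakestForm p) : IsWeakForm p := by
  rcases h with ⟨i, rfl⟩ | ⟨c, rfl⟩
  · exact ⟨1, 0, i, by simp⟩
  · exact ⟨0, c, 0, by simp⟩

theorem IsWeakForm.isGenForm {R : Type} [CommSemiring R] {p : MvPolynomial ℕ R}
    (h : IsWeakForm p) : IsGenForm p := by
  obtain ⟨α, β, i, rfl⟩ := h
  refine (totalDegree_add _ _).trans (max_le ?_ ((totalDegree_C β).trans_le zero_le_one))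
  rw [C_mul_X_eq_monomial]
  exact (totalDegree_monomial_le _ _).trans (by simp)

theorem vpkClass_mono {R : Type} [CommSemiring R] {k : ℕ}
    {form form' : MvPolynomial ℕ R → Prop} (h : ∀ p, form p → form' p) :
    VPkClass R k form ⊆ VPkClass R k form' := by
  rintro f ⟨hfam, s, hs, habp⟩
  refine ⟨hfam, s, hs, fun n => ?_⟩
  obtain ⟨s', hs', v, w, M, hM, hp⟩ := habp n
  exact ⟨s', hs', v, w, M, fun i a b => h _ (hM i a b), hp⟩

/-- Ben-Or–Cleve: for every `k ≥ 3` and every label type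
`* ∈ {weakest, weak, gen}`, `VP_k^*(F) = VPe(F)`. -/
theorem statement5 (F : Type) [Field F] (k : ℕ) (hk : 3 ≤ k) :
    VPkClass F k IsWeakestForm = VPe F ∧
    VPkClass F k IsWeakForm = VPe F ∧
    VPkClass F k IsGenForm = VPe F := by
  have hweakest : VPkClass F k IsWeakestForm ⊆ VPkClass F k IsWeakForm :=
    vpkClass_mono fun _ => IsWeakestForm.isWeakForm
  have hweak : VPkClass F k IsWeakForm ⊆ VPkClass F k IsGenForm :=
    vpkClass_mono fun _ => IsWeakForm.isGenForm
  have hgen : VPkClass F k IsGenForm ⊆ VPe F := vpkClass_isGenForm_subset_vpe F k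
  have hvpe : VPe F ⊆ VPkClass F k IsWeakestForm := vpe_subset_vpkClass_isWeakestForm F hk
  exact ⟨(hweakest.trans (hweak.trans hgen)).antisymm hvpe,
    (hweak.trans hgen).antisymm (hvpe.trans hweakest),
    hgen.antisymm (hvpe.trans (hweakest.trans hweak))⟩

end
end

section
/- (Addition lemma) Let F be a field, k ≥ 1, and let f, g ∈ F[x_1,…,x_m] be polynomials such that some matrix F' ∈ Q(f) + O(ε^k) can be written as a product of n primitive Q-matrices and some matrix G ∈ Q(g) + O(ε^k) can be written as a product of m' primitive Q-matrices. Then some matrix H ∈ Q(f+g) + O(ε^k) can be written as a product of n + m' + 1 primitive Q-matrices; moreover, if F' and G have error degrees at most e_f and e_g respectively, then H has error degree at most e_f + e_g. -/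
open MvPolynomial

noncomputable section

/-! Since `Q(a) · Q(0) · Q(b) = Q(a + b)`, the matrix `H = F' · Q(0) · G` is a product of
`n + 1 + m'` primitive Q-matrices. Expanding `(Q(f) + ε^k E) Q(0) (Q(g) + ε^k E')` shows that
`H ∈ Q(f + g) + O(ε^k)`, and `ε`-degrees add under matrix multiplication while `Q(0)` has
degree `0`. -/

lemma Qmat_mul_Qmat_zero_mul {R : Type} [CommSemiring R] (a b : MvPolynomial ℕ R) :
    Qmat a * Qmat 0 * Qmat b = Qmat (a + b) := by
  ext i j
  fin_cases i <;> fin_cases j <;> simp [Qmat, Matrix.mul_apply, Fin.sum_univ_two, add_comm]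

lemma Qmat_add_smul_mul_Qmat_zero_mul {R : Type} [CommSemiring R] (a b c : MvPolynomial ℕ R)
    (E E' : Matrix (Fin 2) (Fin 2) (MvPolynomial ℕ R)) :
    (Qmat a + c • E) * Qmat 0 * (Qmat b + c • E') =
      Qmat (a + b) + c • (E * Qmat 0 * Qmat b + Qmat a * Qmat 0 * E' +
        c • (E * Qmat 0 * E')) := by
  rw [← Qmat_mul_Qmat_zero_mul]
  simp only [add_mul, mul_add, Matrix.smul_mul, Matrix.mul_smul, smul_add, smul_smul]
  abel

lemma Qmat_map {R S : Type} [CommSemiring R] [CommSemiring S] (φ : R →+* S)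
    (p : MvPolynomial ℕ R) :
    (Qmat p).map (MvPolynomial.map φ) = Qmat (MvPolynomial.map φ p) := by
  ext i j; fin_cases i <;> fin_cases j <;> simp [Qmat]

section

variable {F : Type} [Field F]

lemma liftPolyε_map_algebraMap (p : MvPolynomial ℕ F) :
    liftPolyε F (MvPolynomial.map (algebraMap F (Polynomial F)) p) = liftε F p := by
  rw [liftPolyε, liftε, MvPolynomial.map_map, ← IsScalarTower.algebraMap_eq]

lemma inQErr_iff {f : MvPolynomial ℕ F} {k : ℕ}
    {M : Matrix (Fin 2) (Fin 2) (MvPolynomial ℕ (RatFunc F))} :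
    InQErr F f k M ↔ ∃ E : Matrix (Fin 2) (Fin 2) (MvPolynomial ℕ (Polynomial F)),
      M = (Qmat (MvPolynomial.map (algebraMap F (Polynomial F)) f) +
        (C (Polynomial.X ^ k) : MvPolynomial ℕ (Polynomial F)) • E).map (liftPolyε F) := by
  have hC : liftPolyε F (C (Polynomial.X ^ k) : MvPolynomial ℕ (Polynomial F)) =
      C ((RatFunc.X : RatFunc F) ^ k) := by
    rw [liftPolyε, MvPolynomial.map_C, map_pow, RatFunc.algebraMap_X]
  refine exists_congr fun E => ?_
  rw [Matrix.map_add _ (map_add _), Matrix.map_smulₛₗ _ (liftPolyε F) _ (map_mul _ _), hC,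
    liftPolyε, Qmat_map, ← liftPolyε, liftPolyε_map_algebraMap]

lemma Qmat_zero_map_liftPolyε : (Qmat 0).map (liftPolyε F) = Qmat 0 := by
  rw [liftPolyε, Qmat_map, map_zero]

lemma InQErr.mul_Qmat_zero_mul {f g : MvPolynomial ℕ F} {k : ℕ}
    {M N : Matrix (Fin 2) (Fin 2) (MvPolynomial ℕ (RatFunc F))}
    (hM : InQErr F f k M) (hN : InQErr F g k N) : InQErr F (f + g) k (M * Qmat 0 * N) := by
  obtain ⟨E, rfl⟩ := inQErr_iff.1 hM
  obtain ⟨E', rfl⟩ := inQErr_iff.1 hN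
  rw [← Qmat_zero_map_liftPolyε, ← Matrix.map_mul, ← Matrix.map_mul,
    Qmat_add_smul_mul_Qmat_zero_mul]
  exact inQErr_iff.2 ⟨_, by rw [map_add]⟩

lemma IsProdPrimQ.mul {a b : ℕ} {M N : Matrix (Fin 2) (Fin 2) (MvPolynomial ℕ (RatFunc F))}
    (hM : IsProdPrimQ F a M) (hN : IsProdPrimQ F b N) : IsProdPrimQ F (a + b) (M * N) := by
  obtain ⟨L, hL, rfl⟩ := hM
  obtain ⟨L', hL', rfl⟩ := hN
  refine ⟨Fin.append L L', Fin.addCases (by simpa using hL) (by simpa using hL'), ?_⟩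
  rw [List.ofFn_fin_append, List.prod_append]

lemma isProdPrimQ_one_Qmat_zero : IsProdPrimQ F 1 (Qmat 0) :=
  ⟨fun _ => Qmat 0, fun _ => ⟨0, by simp, rfl⟩, by simp⟩

lemma natDegree_coeff_mul_le {σ R : Type} [CommSemiring R]
    {p q : MvPolynomial σ (Polynomial R)} {a b : ℕ} (hp : ∀ m, (p.coeff m).natDegree ≤ a)
    (hq : ∀ m, (q.coeff m).natDegree ≤ b)
    (m : σ →₀ ℕ) : ((p * q).coeff m).natDegree ≤ a + b := by
  classical
  rw [MvPolynomial.coeff_mul]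
  exact Polynomial.natDegree_sum_le_of_forall_le _ _ fun _ _ =>
    Polynomial.natDegree_mul_le.trans (add_le_add (hp _) (hq _))

lemma ErrDegLE.mul {a b : ℕ} {M N : Matrix (Fin 2) (Fin 2) (MvPolynomial ℕ (RatFunc F))}
    (hM : ErrDegLE F M a) (hN : ErrDegLE F N b) : ErrDegLE F (M * N) (a + b) := by
  obtain ⟨E, rfl, hE⟩ := hM
  obtain ⟨E', rfl, hE'⟩ := hN
  refine ⟨E * E', Matrix.map_mul.symm, fun i j m => ?_⟩
  rw [Matrix.mul_apply, MvPolynomial.coeff_sum]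
  exact Polynomial.natDegree_sum_le_of_forall_le _ _ fun l _ =>
    natDegree_coeff_mul_le (hE i l) (hE' l j) m

lemma errDegLE_Qmat_zero : ErrDegLE F (Qmat 0) 0 := by
  refine ⟨Qmat 0, Qmat_zero_map_liftPolyε.symm, fun i j m => ?_⟩
  fin_cases i <;> fin_cases j <;> simp [Qmat, MvPolynomial.coeff_one, apply_ite]

end

theorem statement7_general (F : Type) [Field F] (k : ℕ)
    (f g : MvPolynomial ℕ F) (n m' : ℕ)
    (F' G : Matrix (Fin 2) (Fin 2) (MvPolynomial ℕ (RatFunc F)))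
    (hF1 : InQErr F f k F') (hF2 : IsProdPrimQ F n F')
    (hG1 : InQErr F g k G) (hG2 : IsProdPrimQ F m' G) :
    ∃ H : Matrix (Fin 2) (Fin 2) (MvPolynomial ℕ (RatFunc F)),
      InQErr F (f + g) k H ∧ IsProdPrimQ F (n + m' + 1) H ∧
      ∀ e_f e_g : ℕ, ErrDegLE F F' e_f → ErrDegLE F G e_g →
        ErrDegLE F H (e_f + e_g) := by
  refine ⟨F' * Qmat 0 * G, hF1.mul_Qmat_zero_mul hG1, ?_, fun e_f e_g hf hg => ?_⟩
  · rw [add_right_comm]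
    exact (hF2.mul isProdPrimQ_one_Qmat_zero).mul hG2
  · simpa using (hf.mul errDegLE_Qmat_zero).mul hg

/-- Addition lemma. -/
theorem statement7 (F : Type) [Field F] (k : ℕ) (hk : 1 ≤ k)
    (f g : MvPolynomial ℕ F) (n m' : ℕ)
    (F' G : Matrix (Fin 2) (Fin 2) (MvPolynomial ℕ (RatFunc F)))
    (hF1 : InQErr F f k F') (hF2 : IsProdPrimQ F n F')
    (hG1 : InQErr F g k G) (hG2 : IsProdPrimQ F m' G) :
    ∃ H : Matrix (Fin 2) (Fin 2) (MvPolynomial ℕ (RatFunc F)),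
      InQErr F (f + g) k H ∧ IsProdPrimQ F (n + m' + 1) H ∧
      ∀ e_f e_g : ℕ, ErrDegLE F F' e_f → ErrDegLE F G e_g →
        ErrDegLE F H (e_f + e_g) :=
  statement7_general F k f g n m' F' G hF1 hF2 hG1 hG2
end
end

section
/- For each label type * ∈ {weakest, weak, gen} and any field F, the class VP_1^*(F) is closed under approximation: VP_1^*(F) equals its approximation closure. That is, if f_n + ε f_{n;1} + … + ε^{e(n)} f_{n;e(n)} is computable, over F(ε), as a product of poly(n) many affine linear forms of type *, then f_n is computable over F as a product of poly(n) many affine linear forms of type *. -/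
open MvPolynomial

noncomputable section

/-!
A width-1 ABP computes `c · ∏ ℓᵢ`. Over `F(ε)` each form `ℓᵢ` is `bᵢ / qᵢ` with `0 ≠ qᵢ ∈ F[ε]`
and `bᵢ ∈ F[x][ε]` whose `ε`-coefficients are forms of the same type as `ℓᵢ`. An approximation
`f + ε(…) = c · ∏ ℓᵢ` therefore becomes an identity `D · G = A · ∏ bᵢ` in `F[x][ε]` with
`G(0) = f`. As `F[x]` is a domain, taking lowest-order coefficients in `ε` is multiplicative,
so `f` is a scalar multiple of the product of the lowest-order coefficients of the `bᵢ`.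
-/

namespace Polynomial

theorem trailingCoeff_map_of_injective {R S : Type*} [Semiring R] [Semiring S] {f : R →+* S}
    (hf : Function.Injective f) (p : R[X]) : (p.map f).trailingCoeff = f p.trailingCoeff := by
  simp only [trailingCoeff, natTrailingDegree, trailingDegree, support_map_of_injective p hf,
    coeff_map]

theorem trailingCoeff_prod {ι R : Type*} [CommSemiring R] [NoZeroDivisors R] [Nontrivial R]
    (s : Finset ι) (p : ι → R[X]) :
    (∏ i ∈ s, p i).trailingCoeff = ∏ i ∈ s, (p i).trailingCoeff := by
  classical
  induction s using Finset.induction_on with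
  | empty => simp [trailingCoeff]
  | insert i s hi ih => rw [Finset.prod_insert hi, Finset.prod_insert hi, trailingCoeff_mul, ih]

end Polynomial

theorem Matrix.ofFn_prod_apply_fin_one {R : Type*} [Semiring R] {s : ℕ}
    (M : Fin s → Matrix (Fin 1) (Fin 1) R) :
    (List.ofFn M).prod 0 0 = (List.ofFn fun i => M i 0 0).prod := by
  have := map_list_prod (Matrix.uniqueRingEquiv (m := Fin 1) (A := R)).toRingHom (List.ofFn M)
  rwa [List.map_ofFn] at this

lemma abpComputes_one_iff {R : Type} [CommSemiring R] (form : MvPolynomial ℕ R → Prop) (s : ℕ)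
    (p : MvPolynomial ℕ R) :
    ABPComputes form 1 s p ↔
      ∃ (c : R) (g : Fin s → MvPolynomial ℕ R), (∀ i, form (g i)) ∧ p = C c * ∏ i, g i := by
  constructor
  · rintro ⟨v, w, M, hM, rfl⟩
    refine ⟨v 0 * w 0, fun i => M i 0 0, fun i => hM i 0 0, ?_⟩
    simp [dotProduct, Matrix.mulVec, Matrix.ofFn_prod_apply_fin_one, List.prod_ofFn]
    ring
  · rintro ⟨c, g, hg, rfl⟩
    refine ⟨fun _ => c, fun _ => 1, fun i => Matrix.of fun _ _ => g i, fun i _ _ => hg i, ?_⟩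
    simp [dotProduct, Matrix.mulVec, Matrix.ofFn_prod_apply_fin_one, List.prod_ofFn]

lemma IsPolyFamily.map {R S : Type} [CommSemiring R] [CommSemiring S] (φ : R →+* S)
    {f : ℕ → MvPolynomial ℕ R} (hf : IsPolyFamily f) : IsPolyFamily fun n => map φ (f n) := by
  obtain ⟨v, hv, hvars⟩ := hf
  exact ⟨v, hv, fun n i hi => hvars n i (vars_map _ φ hi)⟩

section Forms

variable {R S : Type} [CommSemiring R] [CommSemiring S]

lemma IsWeakestForm.map (φ : R →+* S) {p : MvPolynomial ℕ R} (hp : IsWeakestForm p) :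
    IsWeakestForm (map φ p) := by
  rcases hp with ⟨i, rfl⟩ | ⟨c, rfl⟩
  · exact Or.inl ⟨i, map_X φ i⟩
  · exact Or.inr ⟨φ c, map_C φ c⟩

lemma IsWeakForm.map (φ : R →+* S) {p : MvPolynomial ℕ R} (hp : IsWeakForm p) :
    IsWeakForm (map φ p) := by
  obtain ⟨α, β, i, rfl⟩ := hp
  exact ⟨φ α, φ β, i, by simp⟩

lemma IsGenForm.map (φ : R →+* S) {p : MvPolynomial ℕ R} (hp : IsGenForm p) :
    IsGenForm (map φ p) :=
  (Finset.sup_mono (support_map_subset φ p)).trans hp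

lemma isWeakForm_iff_exists_support_subset (p : MvPolynomial ℕ R) :
    IsWeakForm p ↔ ∃ i, p.support ⊆ {0, Finsupp.single i 1} := by
  classical
  constructor
  · rintro ⟨α, β, i, rfl⟩
    refine ⟨i, fun m hm => ?_⟩
    rw [C_mul_X_eq_monomial, C_apply] at hm
    rcases Finset.mem_union.mp (support_add hm) with h | h <;>
      simp [Finset.mem_singleton.mp (support_monomial_subset h)]
  · rintro ⟨i, h⟩
    refine ⟨p.coeff (Finsupp.single i 1), p.coeff 0, i, ?_⟩
    have hne : (0 : ℕ →₀ ℕ) ≠ Finsupp.single i 1 := by simp [eq_comm]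
    conv_lhs => rw [p.as_sum]
    rw [Finset.sum_subset h fun m _ hm => by rw [notMem_support_iff.mp hm, monomial_zero],
      Finset.sum_pair hne, C_mul_X_eq_monomial, C_apply, add_comm]

end Forms

section

variable {F : Type} [Field F]

@[simp] lemma liftε_C (a : F) : liftε F (C a) = C (algebraMap F (RatFunc F) a) :=
  map_C _ a

/-- `F[x][ε] → F(ε)[x]`: the variable of the outer polynomial ring is sent to `ε`. -/
def evalAtε (F : Type) [Field F] : Polynomial (MvPolynomial ℕ F) →+* MvPolynomial ℕ (RatFunc F) :=
  Polynomial.eval₂RingHom (liftε F) (C RatFunc.X)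

@[simp] lemma evalAtε_C (a : MvPolynomial ℕ F) : evalAtε F (Polynomial.C a) = liftε F a :=
  Polynomial.eval₂_C _ _

@[simp] lemma evalAtε_X : evalAtε F Polynomial.X = C RatFunc.X :=
  Polynomial.eval₂_X _ _

lemma evalAtε_map_C (q : Polynomial F) :
    evalAtε F (q.map C) = C (algebraMap (Polynomial F) (RatFunc F) q) := by
  have : (evalAtε F).comp (Polynomial.mapRingHom C) = C.comp (algebraMap _ _) :=
    Polynomial.ringHom_ext' (by ext; simp [liftε]) (by simp)
  exact RingHom.congr_fun this q

lemma evalAtε_eq_comp : evalAtε F = (liftPolyε F).comp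
    ((optionEquivRight F ℕ).toRingEquiv.toRingHom.comp
      (optionEquivLeft F ℕ).symm.toRingEquiv.toRingHom) := by
  refine Polynomial.ringHom_ext' (MvPolynomial.ringHom_ext (fun r => ?_) (fun i => ?_)) ?_ <;>
    simp [liftε, liftPolyε]

lemma evalAtε_injective : Function.Injective (evalAtε F) := by
  rw [evalAtε_eq_comp]
  exact (MvPolynomial.map_injective _ (IsFractionRing.injective (Polynomial F) (RatFunc F))).comp
    ((optionEquivRight F ℕ).injective.comp (optionEquivLeft F ℕ).symm.injective)

def HasFormMultiple (form : MvPolynomial ℕ F → Prop) (ℓ : MvPolynomial ℕ (RatFunc F)) : Prop :=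
  ∃ q : Polynomial F, q ≠ 0 ∧ ∃ b : Polynomial (MvPolynomial ℕ F),
    evalAtε F b = C (algebraMap (Polynomial F) (RatFunc F) q) * ℓ ∧ ∀ t, form (b.coeff t)

lemma hasFormMultiple_of_support_subset (form : MvPolynomial ℕ F → Prop)
    (ℓ : MvPolynomial ℕ (RatFunc F)) (hform : ∀ p, p.support ⊆ ℓ.support → form p) :
    HasFormMultiple form ℓ := by
  classical
  obtain ⟨⟨q, hq⟩, hint⟩ :=
    IsLocalization.exist_integer_multiples (nonZeroDivisors (Polynomial F)) ℓ.support ℓ.coeff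
  choose! r hr using hint
  refine ⟨q, nonZeroDivisors.ne_zero hq,
    ∑ m ∈ ℓ.support, Polynomial.C (monomial m (1 : F)) * (r m).map C, ?_, fun t => hform _ ?_⟩
  · conv_rhs => rw [ℓ.as_sum, Finset.mul_sum]
    rw [map_sum]
    refine Finset.sum_congr rfl fun m hm => ?_
    rw [map_mul, evalAtε_C, evalAtε_map_C, hr m hm]
    simp only [liftε, map_monomial, map_one, Algebra.smul_def, map_mul]
    rw [← map_mul, mul_comm, C_mul_monomial, C_mul_monomial, mul_one]
  · intro x hx
    rw [Polynomial.finsetSum_coeff] at hx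
    obtain ⟨m, hm, hx⟩ := Finset.mem_biUnion.mp (support_sum hx)
    rw [Polynomial.coeff_C_mul, Polynomial.coeff_map, mul_comm, C_mul_monomial, mul_one] at hx
    rwa [Finset.mem_singleton.mp (support_monomial_subset hx)]

lemma hasFormMultiple_of_isGenForm {ℓ : MvPolynomial ℕ (RatFunc F)} (hℓ : IsGenForm ℓ) :
    HasFormMultiple IsGenForm ℓ :=
  hasFormMultiple_of_support_subset _ ℓ fun _ hp => (Finset.sup_mono hp).trans hℓ

lemma hasFormMultiple_of_isWeakForm {ℓ : MvPolynomial ℕ (RatFunc F)} (hℓ : IsWeakForm ℓ) :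
    HasFormMultiple IsWeakForm ℓ := by
  obtain ⟨i, hi⟩ := (isWeakForm_iff_exists_support_subset ℓ).mp hℓ
  exact hasFormMultiple_of_support_subset _ ℓ fun p hp =>
    (isWeakForm_iff_exists_support_subset p).mpr ⟨i, hp.trans hi⟩

lemma hasFormMultiple_of_isWeakestForm {ℓ : MvPolynomial ℕ (RatFunc F)} (hℓ : IsWeakestForm ℓ) :
    HasFormMultiple IsWeakestForm ℓ := by
  rcases hℓ with ⟨i, rfl⟩ | ⟨c, rfl⟩
  · refine ⟨1, one_ne_zero, Polynomial.C (X i), by simp [liftε], fun t => ?_⟩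
    rw [Polynomial.coeff_C]
    split_ifs
    · exact Or.inl ⟨i, rfl⟩
    · exact Or.inr ⟨0, C_0.symm⟩
  · refine hasFormMultiple_of_support_subset _ _ fun p hp => Or.inr ⟨p.coeff 0, ?_⟩
    refine totalDegree_eq_zero_iff_eq_C.mp (Nat.le_zero.mp ?_)
    exact (Finset.sup_mono hp).trans (totalDegree_C c).le

lemma exists_trailingCoeff_eq_C_mul_prod {form : MvPolynomial ℕ F → Prop} {s : ℕ}
    (G : Polynomial (MvPolynomial ℕ F)) (c : RatFunc F) (ℓ : Fin s → MvPolynomial ℕ (RatFunc F))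
    (hℓ : ∀ i, HasFormMultiple form (ℓ i)) (hG : evalAtε F G = C c * ∏ i, ℓ i) :
    ∃ (c' : F) (g : Fin s → MvPolynomial ℕ F),
      (∀ i, form (g i)) ∧ G.trailingCoeff = C c' * ∏ i, g i := by
  choose q hq b hb hform using hℓ
  obtain ⟨⟨a, d⟩, hc⟩ := IsLocalization.surj (nonZeroDivisors (Polynomial F)) c
  have hcleared : (d * ∏ i, q i : Polynomial F).map C * G = a.map C * ∏ i, b i := by
    apply evalAtε_injective
    simp only [map_mul, map_prod, evalAtε_map_C, hG, hb, ← hc]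
    rw [Finset.prod_mul_distrib]
    ring
  have htc := congrArg Polynomial.trailingCoeff hcleared
  rw [Polynomial.trailingCoeff_mul, Polynomial.trailingCoeff_mul, Polynomial.trailingCoeff_prod,
    Polynomial.trailingCoeff_map_of_injective (C_injective ℕ F),
    Polynomial.trailingCoeff_map_of_injective (C_injective ℕ F)] at htc
  set α := (d * ∏ i, q i : Polynomial F).trailingCoeff
  have hα : α ≠ 0 := Polynomial.trailingCoeff_nonzero_iff_nonzero.mpr
    (mul_ne_zero (nonZeroDivisors.ne_zero d.2) (Finset.prod_ne_zero_iff.mpr fun i _ => hq i))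
  refine ⟨α⁻¹ * a.trailingCoeff, fun i => (b i).trailingCoeff, fun i => hform i _, ?_⟩
  rw [map_mul, mul_assoc, ← htc, ← mul_assoc, ← map_mul, inv_mul_cancel₀ hα, map_one, one_mul]

section ApproxClosure

variable {formF : MvPolynomial ℕ F → Prop} {formK : MvPolynomial ℕ (RatFunc F) → Prop} {s : ℕ}

lemma ABPComputes.lift (hlift : ∀ p, formF p → formK (liftε F p)) {p : MvPolynomial ℕ F}
    (h : ABPComputes formF 1 s p) : ABPComputes formK 1 s (liftε F p) := by
  obtain ⟨c, g, hg, rfl⟩ := (abpComputes_one_iff _ _ _).mp h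
  refine (abpComputes_one_iff _ _ _).mpr ⟨algebraMap F (RatFunc F) c, fun i => liftε F (g i),
    fun i => hlift _ (hg i), ?_⟩
  rw [map_mul, map_prod, liftε_C]

lemma ABPComputes.trailingCoeff (hdesc : ∀ ℓ, formK ℓ → HasFormMultiple formF ℓ)
    {G : Polynomial (MvPolynomial ℕ F)} (h : ABPComputes formK 1 s (evalAtε F G)) :
    ABPComputes formF 1 s G.trailingCoeff := by
  obtain ⟨c, ℓ, hℓ, hG⟩ := (abpComputes_one_iff _ _ _).mp h
  exact (abpComputes_one_iff _ _ _).mpr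
    (exists_trailingCoeff_eq_C_mul_prod G c ℓ (fun i => hdesc _ (hℓ i)) hG)

theorem vpkClass_one_eq_approxClosure (hlift : ∀ p, formF p → formK (liftε F p))
    (hdesc : ∀ ℓ, formK ℓ → HasFormMultiple formF ℓ) :
    VPkClass F 1 formF = ApproxClosure F (VPkClass (RatFunc F) 1 formK) := by
  apply Set.Subset.antisymm
  · rintro f ⟨hfam, s, hs, habp⟩
    refine ⟨hfam, fun _ => 0, fun _ _ => 0, ?_⟩
    simp only [Finset.range_zero, Finset.sum_empty, add_zero]
    refine ⟨hfam.map _, s, hs, fun n => ?_⟩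
    obtain ⟨s', hs', habp⟩ := habp n
    exact ⟨s', hs', habp.lift hlift⟩
  · rintro f ⟨hfam, e, ferr, -, s, hs, habp⟩
    refine ⟨hfam, s, hs, fun n => ?_⟩
    obtain ⟨s', hs', habp⟩ := habp n
    by_cases hf : f n = 0
    · exact ⟨0, Nat.zero_le _, (abpComputes_one_iff _ _ _).mpr
        ⟨0, Fin.elim0, fun i => i.elim0, by simp [hf]⟩⟩
    let G : Polynomial (MvPolynomial ℕ F) :=
      Polynomial.C (f n) +
        ∑ i ∈ Finset.range (e n), Polynomial.X ^ (i + 1) * Polynomial.C (ferr n i)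
    have hG : evalAtε F G = liftε F (f n) + ∑ i ∈ Finset.range (e n),
        C ((RatFunc.X : RatFunc F) ^ (i + 1)) * liftε F (ferr n i) := by
      simp only [G, map_add, map_sum, map_mul, map_pow, evalAtε_C, evalAtε_X]
    have hGtc : G.trailingCoeff = f n := by
      rw [Polynomial.trailingCoeff_eq_coeff_zero] <;> simp [G, hf]
    exact ⟨s', hs', hGtc ▸ ABPComputes.trailingCoeff hdesc (hG ▸ habp)⟩

end ApproxClosure

end

/-- for each label type `* ∈ {weakest, weak, gen}`, `VP_1^*` equals its
approximation closure. -/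
theorem statement17 (F : Type) [Field F] :
    VPkClass F 1 IsWeakestForm =
      ApproxClosure F (VPkClass (RatFunc F) 1 IsWeakestForm) ∧
    VPkClass F 1 IsWeakForm = ApproxClosure F (VPkClass (RatFunc F) 1 IsWeakForm) ∧
    VPkClass F 1 IsGenForm = ApproxClosure F (VPkClass (RatFunc F) 1 IsGenForm) :=
  ⟨vpkClass_one_eq_approxClosure (fun _ hp => hp.map _) fun _ => hasFormMultiple_of_isWeakestForm,
    vpkClass_one_eq_approxClosure (fun _ hp => hp.map _) fun _ => hasFormMultiple_of_isWeakForm,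
    vpkClass_one_eq_approxClosure (fun _ hp => hp.map _) fun _ => hasFormMultiple_of_isGenForm⟩
end
end
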